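/- Let (B, ⊑) be a DCPO_⊥-ordered functor with cofree comonad B^∞, Σ a Set-functor with free monad Σ*, and ρ : ΣB^∞ ⇒ BΣ* a monotone biGSOS specification. For each B-coalgebra c : X → BX write c̄ : Σ*X → BΣ*X for the least fixed point of φ_c(f) = [Bμ_X ∘ ρ_{Σ*X} ∘ Σ(f^∞), Bη_X ∘ c] ∘ [ι_X, η_X]⁻¹ (which exists since the coalgebras Σ*X → BΣ*X, ordered pointwise, form a pointed DCPO). Then the assignment Σ̄*(X, c) = (Σ*X, c̄) and Σ̄*(h) = Σ*h defines a functor Σ̄* : Coalg(B) → Coalg(B) lifting Σ*; in particular, if h : X → Y is a B-coalgebra homomorphism from c : X → BX to d : Y → BY, then Σ*h is a B-coalgebra homomorphism from c̄ to d̄. -/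
import Mathlib


/-- A `Set`-endofunctor, presented concretely. -/
structure SetFunctor where
  obj : Type → Type
  map : {X Y : Type} → (X → Y) → obj X → obj Y
  map_id : ∀ {X : Type}, map (id : X → X) = id
  map_comp : ∀ {X Y Z : Type} (f : X → Y) (g : Y → Z), map (g ∘ f) = map g ∘ map f

/-- An ordered functor: a `Set`-functor together with a preorder on each `B X`,
such that `B f` is monotone for every `f`. -/
structure OrderedFunctor extends SetFunctor where
  le : {X : Type} → obj X → obj X → Prop
  le_refl : ∀ {X : Type} (b : obj X), le b b
  le_trans : ∀ {X : Type} {a b c : obj X}, le a b → le b c → le a c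
  map_mono : ∀ {X Y : Type} (f : X → Y) {b c : obj X}, le b c → le (map f b) (map f c)

/-- The canonical relation lifting of a `Set`-functor. -/
def SetFunctor.relLift (B : SetFunctor) {X Y : Type} (R : X → Y → Prop)
    (b : B.obj X) (c : B.obj Y) : Prop :=
  ∃ d : B.obj {p : X × Y // R p.1 p.2},
    B.map (fun p => p.1.1) d = b ∧ B.map (fun p => p.1.2) d = c

/-- The lax relation lifting `⊑ ∘ Rel(B)(R) ∘ ⊑` of an ordered functor. -/
def OrderedFunctor.laxRelLift (B : OrderedFunctor) {X Y : Type} (R : X → Y → Prop)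
    (b : B.obj X) (c : B.obj Y) : Prop :=
  ∃ b' c', B.le b b' ∧ B.toSetFunctor.relLift R b' c' ∧ B.le c' c

/-- `R` is a simulation between coalgebras `f` and `g`. -/
def OrderedFunctor.IsSimulation (B : OrderedFunctor) {X Y : Type}
    (f : X → B.obj X) (g : Y → B.obj Y) (R : X → Y → Prop) : Prop :=
  ∀ x y, R x y → B.laxRelLift R (f x) (g y)

/-- Similarity: the greatest simulation (union of all simulations). -/
def OrderedFunctor.Sim (B : OrderedFunctor) {X Y : Type}
    (f : X → B.obj X) (g : Y → B.obj Y) (x : X) (y : Y) : Prop :=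
  ∃ R, B.IsSimulation f g R ∧ R x y

/-- The ordered functor `B(-) × Z`, with `(b,z) ⊑̃ (c,z') iff b ⊑ c ∧ z = z'`. -/
def OrderedFunctor.prodConst (B : OrderedFunctor) (Z : Type) : OrderedFunctor where
  obj X := B.obj X × Z
  map f p := (B.map f p.1, p.2)
  map_id := by intro X; funext p; simp [SetFunctor.map_id]
  map_comp := by intro X Y Z' f g; funext p; simp [SetFunctor.map_comp]
  le p q := B.le p.1 q.1 ∧ p.2 = q.2
  le_refl := by intro X p; exact ⟨B.le_refl _, rfl⟩
  le_trans := by intro X a b c h1 h2; exact ⟨B.le_trans h1.1 h2.1, h1.2.trans h2.2⟩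
  map_mono := by intro X Y f b c h; exact ⟨B.map_mono f h.1, h.2⟩

/-- `h` is a `B`-coalgebra homomorphism from `(X, f)` to `(Y, g)`. -/
def IsCoalgHom (B : SetFunctor) {X Y : Type} (f : X → B.obj X) (g : Y → B.obj Y)
    (h : X → Y) : Prop :=
  ∀ x, B.map h (f x) = g (h x)

/-- A cofree comonad for `B`: for every `X`, `⟨θ_X, ε_X⟩ : B^∞X → B(B^∞X) × X` is a
final coalgebra for `B(-) × X`; `ext f p` is the unique mediating homomorphism. -/
structure Cofree (B : SetFunctor) where
  obj : Type → Type
  θ : {X : Type} → obj X → B.obj (obj X)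
  ε : {X : Type} → obj X → X
  ext : {X C : Type} → (C → B.obj C) → (C → X) → C → obj X
  θ_ext : ∀ {X C : Type} (f : C → B.obj C) (p : C → X) (c : C),
    θ (ext f p c) = B.map (ext f p) (f c)
  ε_ext : ∀ {X C : Type} (f : C → B.obj C) (p : C → X) (c : C),
    ε (ext f p c) = p c
  ext_unique : ∀ {X C : Type} (f : C → B.obj C) (p : C → X) (h : C → obj X),
    (∀ c, θ (h c) = B.map h (f c)) → (∀ c, ε (h c) = p c) → h = ext f p

/-- The functorial action of the cofree comonad `B^∞`. -/
def Cofree.cmap {B : SetFunctor} (W : Cofree B) {X Y : Type} (h : X → Y) :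
    W.obj X → W.obj Y :=
  W.ext W.θ (h ∘ W.ε)

/-- The coinductive extension `f^∞ : X → B^∞X` of a coalgebra `f : X → BX`. -/
def Cofree.coext {B : SetFunctor} (W : Cofree B) {X : Type} (f : X → B.obj X) :
    X → W.obj X :=
  W.ext f id

/-- The comultiplication `δ : B^∞ ⇒ B^∞B^∞` of the cofree comonad. -/
def Cofree.δ {B : SetFunctor} (W : Cofree B) {X : Type} : W.obj X → W.obj (W.obj X) :=
  W.ext W.θ id

/-- The similarity order `≲_{B^∞X}` on the cofree coalgebra `B^∞X`: similarity of
`⟨θ_X, ε_X⟩` with itself for the ordered functor `B(-) × X`. -/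
def cofreeSim (B : OrderedFunctor) (W : Cofree B.toSetFunctor) (X : Type) :
    W.obj X → W.obj X → Prop :=
  (B.prodConst X).Sim (fun w => (W.θ w, W.ε w)) (fun w => (W.θ w, W.ε w))

/-- A free monad for `Σ`: `[ι_X, η_X] : Σ(Σ*X) + X → Σ*X` is an initial algebra
for `Σ(-) + X`, with `fold` the unique mediating algebra homomorphism, and
(by Lambek's lemma) `[ι_X, η_X]` is an isomorphism with inverse `dest`. -/
structure FreeMonad (S : SetFunctor) where
  obj : Type → Type
  η : {X : Type} → X → obj X
  ι : {X : Type} → S.obj (obj X) → obj X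
  fold : {X A : Type} → (S.obj A → A) → (X → A) → obj X → A
  fold_ι : ∀ {X A : Type} (a : S.obj A → A) (h : X → A) (t : S.obj (obj X)),
    fold a h (ι t) = a (S.map (fold a h) t)
  fold_η : ∀ {X A : Type} (a : S.obj A → A) (h : X → A) (x : X),
    fold a h (η x) = h x
  fold_unique : ∀ {X A : Type} (a : S.obj A → A) (h : X → A) (k : obj X → A),
    (∀ t, k (ι t) = a (S.map k t)) → (∀ x, k (η x) = h x) → k = fold a h
  dest : {X : Type} → obj X → S.obj (obj X) ⊕ X
  dest_ι : ∀ {X : Type} (t : S.obj (obj X)), dest (ι t) = Sum.inl t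
  dest_η : ∀ {X : Type} (x : X), dest (η x) = Sum.inr x
  elim_dest : ∀ {X : Type} (t : obj X), Sum.elim ι η (dest t) = t

/-- The functorial action of the free monad `Σ*`. -/
def FreeMonad.mmap {S : SetFunctor} (M : FreeMonad S) {X Y : Type} (h : X → Y) :
    M.obj X → M.obj Y :=
  M.fold M.ι (M.η ∘ h)

/-- The multiplication `μ : Σ*Σ* ⇒ Σ*` of the free monad. -/
def FreeMonad.μ {S : SetFunctor} (M : FreeMonad S) {X : Type} :
    M.obj (M.obj X) → M.obj X :=
  M.fold M.ι id

/-- A biGSOS specification: a natural transformation `ρ : ΣB^∞ ⇒ BΣ*`. -/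
structure BiGSOS (S : SetFunctor) (B : OrderedFunctor) (W : Cofree B.toSetFunctor)
    (M : FreeMonad S) where
  app : {X : Type} → S.obj (W.obj X) → B.obj (M.obj X)
  naturality : ∀ {X Y : Type} (h : X → Y) (u : S.obj (W.obj X)),
    app (S.map (W.cmap h) u) = B.map (M.mmap h) (app u)

/-- Monotonicity of a biGSOS specification. -/
def BiGSOS.Monotone {S : SetFunctor} {B : OrderedFunctor} {W : Cofree B.toSetFunctor}
    {M : FreeMonad S} (ρ : BiGSOS S B W M) : Prop :=
  ∀ (X : Type) (u v : S.obj (W.obj X)),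
    S.relLift (cofreeSim B W X) u v → B.le (ρ.app u) (ρ.app v)

/-- The map `φ(f) = Bμ_∅ ∘ ρ_{Σ*∅} ∘ Σ(f^∞) ∘ ι_∅⁻¹` on coalgebras `Σ*∅ → BΣ*∅`. -/
def phi0 {S : SetFunctor} {B : OrderedFunctor} {W : Cofree B.toSetFunctor}
    {M : FreeMonad S} (ρ : BiGSOS S B W M)
    (f : M.obj Empty → B.obj (M.obj Empty)) : M.obj Empty → B.obj (M.obj Empty) :=
  fun t => Sum.elim (fun s => B.map M.μ (ρ.app (S.map (W.coext f) s)))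
    (fun x => x.elim) (M.dest t)

/-- The map `φ_c(f) = [Bμ_X ∘ ρ_{Σ*X} ∘ Σ(f^∞), Bη_X ∘ c] ∘ [ι_X, η_X]⁻¹` on
coalgebras `Σ*X → BΣ*X`, for a coalgebra `c : X → BX`. -/
def phiC {S : SetFunctor} {B : OrderedFunctor} {W : Cofree B.toSetFunctor}
    {M : FreeMonad S} (ρ : BiGSOS S B W M) {X : Type} (c : X → B.obj X)
    (f : M.obj X → B.obj (M.obj X)) : M.obj X → B.obj (M.obj X) :=
  fun t => Sum.elim (fun s => B.map M.μ (ρ.app (S.map (W.coext f) s)))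
    (fun x => B.map M.η (c x)) (M.dest t)

/-- A supported model of a biGSOS specification `ρ`. -/
def IsSupportedModel {S : SetFunctor} {B : OrderedFunctor} {W : Cofree B.toSetFunctor}
    {M : FreeMonad S} (ρ : BiGSOS S B W M)
    (f : M.obj Empty → B.obj (M.obj Empty)) : Prop :=
  ∀ t : S.obj (M.obj Empty), f (M.ι t) = B.map M.μ (ρ.app (S.map (W.coext f) t))

/-- The least supported model of `ρ` (least w.r.t. the pointwise order). -/
def IsLeastSupportedModel {S : SetFunctor} {B : OrderedFunctor} {W : Cofree B.toSetFunctor}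
    {M : FreeMonad S} (ρ : BiGSOS S B W M)
    (m : M.obj Empty → B.obj (M.obj Empty)) : Prop :=
  IsSupportedModel ρ m ∧ ∀ f, IsSupportedModel ρ f → ∀ t, B.le (m t) (f t)

/-- `u` is a least upper bound of `D` with respect to the relation `le`. -/
def IsLubRel {α : Type} (le : α → α → Prop) (D : Set α) (u : α) : Prop :=
  (∀ a ∈ D, le a u) ∧ ∀ v, (∀ a ∈ D, le a v) → le u v

/-- `le` makes `α` into a pointed DCPO: a partial order with a least element in
which every nonempty directed subset has a least upper bound. -/
def IsPointedDCPO {α : Type} (le : α → α → Prop) : Prop :=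
  (∀ a b : α, le a b → le b a → a = b) ∧
  (∃ bot : α, ∀ a, le bot a) ∧
  ∀ D : Set α, D.Nonempty → DirectedOn le D → ∃ u, IsLubRel le D u

/-- A `DCPO_⊥`-ordered functor: each `BX` is a pointed DCPO and each `Bf` is continuous. -/
structure DCPOOrderedFunctor extends OrderedFunctor where
  dcpo : ∀ X : Type, IsPointedDCPO (fun a b : obj X => le a b)
  map_cont : ∀ {X Y : Type} (f : X → Y) (D : Set (obj X)) (u : obj X),
    D.Nonempty → DirectedOn (fun a b => le a b) D →
    IsLubRel (fun a b => le a b) D u →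
    IsLubRel (fun a b => le a b) (map f '' D) (map f u)

/-- Preservation of weak pullbacks by a `Set`-functor. -/
def SetFunctor.PreservesWeakPullbacks (B : SetFunctor) : Prop :=
  ∀ {X Y Z : Type} (f : X → Z) (g : Y → Z) (u : B.obj X) (v : B.obj Y),
    B.map f u = B.map g v →
    ∃ d : B.obj {p : X × Y // f p.1 = g p.2},
      B.map (fun p => p.1.1) d = u ∧ B.map (fun p => p.1.2) d = v

/-- `m` is the least fixed point of `φ` on coalgebras with carrier `C`. -/
def IsLfpCoalg (B : OrderedFunctor) {C : Type}
    (φ : (C → B.obj C) → (C → B.obj C)) (m : C → B.obj C) : Prop :=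
  φ m = m ∧ ∀ f, φ f = f → ∀ t, B.le (m t) (f t)

/-- A distributive law `λ : Σ*B^∞ ⇒ B^∞Σ*` of the free monad `Σ*` over the cofree
comonad `B^∞`. -/
structure DistLaw (S B : SetFunctor) (W : Cofree B) (M : FreeMonad S) where
  app : {X : Type} → M.obj (W.obj X) → W.obj (M.obj X)
  naturality : ∀ {X Y : Type} (h : X → Y) (t : M.obj (W.obj X)),
    app (M.mmap (W.cmap h) t) = W.cmap (M.mmap h) (app t)
  unit : ∀ {X : Type} (w : W.obj X), app (M.η w) = W.cmap M.η w
  counit : ∀ {X : Type} (t : M.obj (W.obj X)), W.ε (app t) = M.mmap W.ε t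
  mult : ∀ {X : Type} (t : M.obj (M.obj (W.obj X))),
    app (M.μ t) = W.cmap M.μ (app (M.mmap app t))
  comult : ∀ {X : Type} (t : M.obj (W.obj X)),
    W.δ (app t) = W.cmap app (app (M.mmap W.δ t))


/-! Generic pointed-dcpo least-fixed-point machinery -/

attribute [local instance] Classical.propDecidable

noncomputable section

/-- chosen bottom of a pointed dcpo -/
noncomputable def pbot {α : Type} (le : α → α → Prop) (hdc : IsPointedDCPO le) : α :=
  Classical.choose hdc.2.1

lemma pbot_le {α : Type} (le : α → α → Prop) (hdc : IsPointedDCPO le) (a : α) :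
    le (pbot le hdc) a :=
  Classical.choose_spec hdc.2.1 a

/-- chosen lub of a directed set (bot as default) -/
noncomputable def pdlub {α : Type} (le : α → α → Prop) (hdc : IsPointedDCPO le)
    (D : Set α) : α :=
  if h : D.Nonempty ∧ DirectedOn le D then
    Classical.choose (hdc.2.2 D h.1 h.2)
  else pbot le hdc

lemma pdlub_spec {α : Type} (le : α → α → Prop) (hdc : IsPointedDCPO le) {D : Set α}
    (h1 : D.Nonempty) (h2 : DirectedOn le D) : IsLubRel le D (pdlub le hdc D) := by
  rw [pdlub, dif_pos (⟨h1, h2⟩ : D.Nonempty ∧ DirectedOn le D)]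
  exact Classical.choose_spec (hdc.2.2 D h1 h2)

lemma lub_unique {α : Type} (le : α → α → Prop) (hdc : IsPointedDCPO le) {D : Set α}
    {u v : α} (hu : IsLubRel le D u) (hv : IsLubRel le D v) : u = v :=
  hdc.1 u v (hu.2 v hv.1) (hv.2 u hu.1)

/-- transfinite iteration of `φ` from bottom -/
noncomputable def lfpIter {α : Type} (le : α → α → Prop) (hdc : IsPointedDCPO le)
    (φ : α → α) : Ordinal → α :=
  Ordinal.lt_wf.fix (fun o IH =>
    φ (pdlub le hdc (insert (pbot le hdc) {a | ∃ β, ∃ h : β < o, IH β h = a})))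

/-- the approximation set at stage `o` -/
def lfpSet {α : Type} (le : α → α → Prop) (hdc : IsPointedDCPO le) (φ : α → α)
    (o : Ordinal) : Set α :=
  insert (pbot le hdc) {a | ∃ β, ∃ _ : β < o, lfpIter le hdc φ β = a}

lemma lfpIter_def {α : Type} (le : α → α → Prop) (hdc : IsPointedDCPO le) (φ : α → α)
    (o : Ordinal) :
    lfpIter le hdc φ o = φ (pdlub le hdc (lfpSet le hdc φ o)) := by
  rw [lfpIter, WellFounded.fix_eq]
  rfl

lemma lfpSet_nonempty {α : Type} (le : α → α → Prop) (hdc : IsPointedDCPO le)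
    (φ : α → α) (o : Ordinal) : (lfpSet le hdc φ o).Nonempty :=
  ⟨pbot le hdc, Set.mem_insert _ _⟩

lemma lfpSet_directed {α : Type} (le : α → α → Prop)
    (hrefl : ∀ a, le a a)
    (hdc : IsPointedDCPO le) (φ : α → α) (o : Ordinal)
    (hpair : ∀ β γ, β < γ → γ < o →
      le (lfpIter le hdc φ β) (lfpIter le hdc φ γ)) :
    DirectedOn le (lfpSet le hdc φ o) := by
  intro x hx y hy
  rcases hx with hx | ⟨β, hβ, rfl⟩
  · subst hx
    exact ⟨y, hy, pbot_le le hdc y, hrefl y⟩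
  · rcases hy with hy | ⟨γ, hγ, rfl⟩
    · subst hy
      exact ⟨lfpIter le hdc φ β, Or.inr ⟨β, hβ, rfl⟩, hrefl _, pbot_le le hdc _⟩
    · rcases lt_trichotomy β γ with h | h | h
      · exact ⟨lfpIter le hdc φ γ, Or.inr ⟨γ, hγ, rfl⟩, hpair β γ h hγ, hrefl _⟩
      · subst h
        exact ⟨lfpIter le hdc φ β, Or.inr ⟨β, hβ, rfl⟩, hrefl _, hrefl _⟩
      · exact ⟨lfpIter le hdc φ β, Or.inr ⟨β, hβ, rfl⟩, hrefl _, hpair γ β h hβ⟩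

lemma lfpIter_mono {α : Type} (le : α → α → Prop)
    (hrefl : ∀ a, le a a)
    (hdc : IsPointedDCPO le) (φ : α → α)
    (hmono : ∀ {a b : α}, le a b → le (φ a) (φ b)) : ∀ o β, β < o →
    le (lfpIter le hdc φ β) (lfpIter le hdc φ o) := by
  intro o
  induction o using Ordinal.induction with
  | h o IH =>
    intro β hβ
    have hpairo : ∀ β' γ, β' < γ → γ < o →
        le (lfpIter le hdc φ β') (lfpIter le hdc φ γ) := fun β' γ h1 h2 =>
      IH γ h2 β' h1
    have hpairβ : ∀ β' γ, β' < γ → γ < β →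
        le (lfpIter le hdc φ β') (lfpIter le hdc φ γ) := fun β' γ h1 h2 =>
      IH γ (h2.trans hβ) β' h1
    have hdirβ := lfpSet_directed le hrefl hdc φ β hpairβ
    have hdiro := lfpSet_directed le hrefl hdc φ o hpairo
    have hlubβ := pdlub_spec le hdc (lfpSet_nonempty le hdc φ β) hdirβ
    have hlubo := pdlub_spec le hdc (lfpSet_nonempty le hdc φ o) hdiro
    rw [lfpIter_def le hdc φ β, lfpIter_def le hdc φ o]
    apply hmono
    apply hlubβ.2
    intro a ha
    rcases ha with ha | ⟨γ, hγ, rfl⟩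
    · subst ha; exact pbot_le le hdc _
    · exact hlubo.1 _ (Or.inr ⟨γ, hγ.trans hβ, rfl⟩)

lemma lfpIter_mono' {α : Type} (le : α → α → Prop)
    (hrefl : ∀ a, le a a)
    (hdc : IsPointedDCPO le) (φ : α → α)
    (hmono : ∀ {a b : α}, le a b → le (φ a) (φ b)) {β o : Ordinal} (h : β ≤ o) :
    le (lfpIter le hdc φ β) (lfpIter le hdc φ o) := by
  rcases eq_or_lt_of_le h with rfl | h
  · exact hrefl _
  · exact lfpIter_mono le hrefl hdc φ (fun {a b} => hmono) o β h

/-- Main generic theorem: existence of the least fixed point, together with an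
induction (invariant) principle for it. -/
theorem genLfp {α : Type} (le : α → α → Prop)
    (hrefl : ∀ a, le a a)
    (hdc : IsPointedDCPO le) (φ : α → α)
    (hmono : ∀ {a b : α}, le a b → le (φ a) (φ b)) :
    ∃ m : α, φ m = m ∧ (∀ f, φ f = f → le m f) ∧
      ∀ P : α → Prop,
        (∀ b, (∀ z, le b z) → P b) →
        (∀ a, P a → P (φ a)) →
        (∀ D : Set α, D.Nonempty → DirectedOn le D → (∀ x ∈ D, P x) →
          ∀ u, IsLubRel le D u → P u) →
        P m := by
  classical
  have hmono' : ∀ {a b : α}, le a b → le (φ a) (φ b) := hmono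
  -- the iteration is not injective
  have hni : ¬ Function.Injective (lfpIter le hdc φ) := by
    intro hinj
    have : Small.{0} Ordinal.{0} := small_of_injective hinj
    exact not_small_ordinal this
  rw [Function.not_injective_iff] at hni
  obtain ⟨o₁, o₂, heq, hne⟩ := hni
  have key : ∀ a b : Ordinal, a < b → lfpIter le hdc φ a = lfpIter le hdc φ b →
      ∃ o : Ordinal, lfpIter le hdc φ (o + 1) = lfpIter le hdc φ o := by
    intro a b hab hiter
    refine ⟨a, hdc.1 _ _ ?_ ?_⟩
    · have h1 : a + 1 ≤ b := by
        rw [Ordinal.add_one_eq_succ]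
        exact Order.succ_le_of_lt hab
      have h2 := lfpIter_mono' le hrefl hdc φ (fun {a b} => hmono) h1
      rw [← hiter] at h2
      exact h2
    · exact lfpIter_mono' le hrefl hdc φ (fun {a b} => hmono) (by
        rw [Ordinal.add_one_eq_succ]; exact Order.le_succ a)
  have hoo : ∃ o : Ordinal, lfpIter le hdc φ (o + 1) = lfpIter le hdc φ o := by
    rcases lt_or_gt_of_ne hne with h | h
    · exact key o₁ o₂ h heq
    · exact key o₂ o₁ h heq.symm
  obtain ⟨o, ho⟩ := hoo
  have hpairs : ∀ p, ∀ β' γ, β' < γ → γ < p →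
      le (lfpIter le hdc φ β') (lfpIter le hdc φ γ) := fun p β' γ h1 _ =>
    lfpIter_mono le hrefl hdc φ (fun {a b} => hmono) γ β' h1
  have hdirS : ∀ p, DirectedOn le (lfpSet le hdc φ p) := fun p =>
    lfpSet_directed le hrefl hdc φ p (hpairs p)
  have hlubS : ∀ p, IsLubRel le (lfpSet le hdc φ p)
      (pdlub le hdc (lfpSet le hdc φ p)) := fun p =>
    pdlub_spec le hdc (lfpSet_nonempty le hdc φ p) (hdirS p)
  set m := lfpIter le hdc φ o with hm
  have hsucc : pdlub le hdc (lfpSet le hdc φ (o + 1)) = m := by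
    apply hdc.1
    · apply (hlubS (o + 1)).2
      intro a ha
      rcases ha with ha | ⟨γ, hγ, rfl⟩
      · subst ha; exact pbot_le le hdc _
      · apply lfpIter_mono' le hrefl hdc φ (fun {a b} => hmono)
        rw [Ordinal.add_one_eq_succ] at hγ
        exact Order.lt_succ_iff.mp hγ
    · exact (hlubS (o + 1)).1 _ (Or.inr ⟨o, by
        rw [Ordinal.add_one_eq_succ]; exact Order.lt_succ o, rfl⟩)
  have hfix : φ m = m := by
    conv_lhs => rw [← hsucc]
    rw [← lfpIter_def le hdc φ (o + 1)]
    exact ho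
  refine ⟨m, hfix, ?_, ?_⟩
  · intro f hf
    have hall : ∀ p, le (lfpIter le hdc φ p) f := by
      intro p
      induction p using Ordinal.induction with
      | h p IH =>
        rw [lfpIter_def]
        have h1 : le (pdlub le hdc (lfpSet le hdc φ p)) f := by
          apply (hlubS p).2
          intro a ha
          rcases ha with ha | ⟨γ, hγ, rfl⟩
          · subst ha; exact pbot_le le hdc _
          · exact IH γ hγ
        have h2 := hmono' h1
        rwa [hf] at h2
    exact hall o
  · intro P hbot hstep hlub
    have hall : ∀ p, P (lfpIter le hdc φ p) := by
      intro p
      induction p using Ordinal.induction with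
      | h p IH =>
        rw [lfpIter_def]
        apply hstep
        apply hlub _ (lfpSet_nonempty le hdc φ p) (hdirS p) _ _ (hlubS p)
        intro x hx
        rcases hx with hx | ⟨γ, hγ, rfl⟩
        · subst hx; exact hbot _ (pbot_le le hdc)
        · exact IH γ hγ
    exact hall o

end

/-! Function-space and product pointed dcpos -/

section Spaces

variable {ι : Type} {β : Type} (leB : β → β → Prop)

/-- pointwise order on functions -/
def leFn : (ι → β) → (ι → β) → Prop := fun f g => ∀ i, leB (f i) (g i)

lemma leFn_refl (hrefl : ∀ a, leB a a) (f : ι → β) : leFn leB f f := fun i => hrefl (f i)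

lemma leFn_trans (htrans : ∀ {a b c : β}, leB a b → leB b c → leB a c)
    {f g h : ι → β} (h1 : leFn leB f g) (h2 : leFn leB g h) : leFn leB f h :=
  fun i => htrans (h1 i) (h2 i)

lemma dirOn_image_fn {D : Set (ι → β)} (hD : DirectedOn (leFn leB) D) (i : ι) :
    DirectedOn leB ((fun f => f i) '' D) := by
  rintro x ⟨f, hf, rfl⟩ y ⟨g, hg, rfl⟩
  obtain ⟨h, hh, h1, h2⟩ := hD f hf g hg
  exact ⟨h i, ⟨h, hh, rfl⟩, h1 i, h2 i⟩

/-- canonical pointwise lub -/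
noncomputable def fnLub (hdcB : IsPointedDCPO leB) (D : Set (ι → β)) : ι → β :=
  fun i => pdlub leB hdcB ((fun f => f i) '' D)

lemma fnLub_isLub (hdcB : IsPointedDCPO leB) {D : Set (ι → β)}
    (h1 : D.Nonempty) (h2 : DirectedOn (leFn leB) D) :
    IsLubRel (leFn leB) D (fnLub leB hdcB D) := by
  constructor
  · intro f hf i
    exact (pdlub_spec leB hdcB (h1.image _) (dirOn_image_fn leB h2 i)).1 _ ⟨f, hf, rfl⟩
  · intro v hv i
    apply (pdlub_spec leB hdcB (h1.image _) (dirOn_image_fn leB h2 i)).2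
    rintro b ⟨f, hf, rfl⟩
    exact hv f hf i

lemma fnDCPO (hdcB : IsPointedDCPO leB) : IsPointedDCPO (leFn (ι := ι) leB) := by
  refine ⟨?_, ⟨fun _ => pbot leB hdcB, fun a i => pbot_le leB hdcB (a i)⟩, ?_⟩
  · intro f g h1 h2
    funext i
    exact hdcB.1 _ _ (h1 i) (h2 i)
  · intro D h1 h2
    exact ⟨fnLub leB hdcB D, fnLub_isLub leB hdcB h1 h2⟩

/-- a lub in the function space is a pointwise lub -/
lemma fnLub_pointwise (hdcB : IsPointedDCPO leB) {D : Set (ι → β)} {u : ι → β}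
    (h1 : D.Nonempty) (h2 : DirectedOn (leFn leB) D)
    (hu : IsLubRel (leFn leB) D u) (i : ι) :
    IsLubRel leB ((fun f => f i) '' D) (u i) := by
  have := lub_unique (leFn leB) (fnDCPO leB hdcB) hu (fnLub_isLub leB hdcB h1 h2)
  rw [this]
  constructor
  · rintro b ⟨f, hf, rfl⟩
    exact (pdlub_spec leB hdcB (h1.image _) (dirOn_image_fn leB h2 i)).1 _ ⟨f, hf, rfl⟩
  · exact (pdlub_spec leB hdcB (h1.image _) (dirOn_image_fn leB h2 i)).2

end Spaces

section Pairs

variable {α₁ α₂ : Type} (le₁ : α₁ → α₁ → Prop) (le₂ : α₂ → α₂ → Prop)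

/-- componentwise order on pairs -/
def lePr : α₁ × α₂ → α₁ × α₂ → Prop := fun p q => le₁ p.1 q.1 ∧ le₂ p.2 q.2

lemma dirOn_fst {D : Set (α₁ × α₂)} (hD : DirectedOn (lePr le₁ le₂) D) :
    DirectedOn le₁ (Prod.fst '' D) := by
  rintro x ⟨p, hp, rfl⟩ y ⟨q, hq, rfl⟩
  obtain ⟨r, hr, h1, h2⟩ := hD p hp q hq
  exact ⟨r.1, ⟨r, hr, rfl⟩, h1.1, h2.1⟩

lemma dirOn_snd {D : Set (α₁ × α₂)} (hD : DirectedOn (lePr le₁ le₂) D) :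
    DirectedOn le₂ (Prod.snd '' D) := by
  rintro x ⟨p, hp, rfl⟩ y ⟨q, hq, rfl⟩
  obtain ⟨r, hr, h1, h2⟩ := hD p hp q hq
  exact ⟨r.2, ⟨r, hr, rfl⟩, h1.2, h2.2⟩

noncomputable def prLub (hd1 : IsPointedDCPO le₁) (hd2 : IsPointedDCPO le₂)
    (D : Set (α₁ × α₂)) : α₁ × α₂ :=
  (pdlub le₁ hd1 (Prod.fst '' D), pdlub le₂ hd2 (Prod.snd '' D))

lemma prLub_isLub (hd1 : IsPointedDCPO le₁) (hd2 : IsPointedDCPO le₂)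
    {D : Set (α₁ × α₂)} (h1 : D.Nonempty) (h2 : DirectedOn (lePr le₁ le₂) D) :
    IsLubRel (lePr le₁ le₂) D (prLub le₁ le₂ hd1 hd2 D) := by
  have s1 := pdlub_spec le₁ hd1 (h1.image Prod.fst) (dirOn_fst le₁ le₂ h2)
  have s2 := pdlub_spec le₂ hd2 (h1.image Prod.snd) (dirOn_snd le₁ le₂ h2)
  constructor
  · intro p hp
    exact ⟨s1.1 _ ⟨p, hp, rfl⟩, s2.1 _ ⟨p, hp, rfl⟩⟩
  · intro v hv
    constructor
    · apply s1.2; rintro b ⟨p, hp, rfl⟩; exact (hv p hp).1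
    · apply s2.2; rintro b ⟨p, hp, rfl⟩; exact (hv p hp).2

lemma prDCPO (hd1 : IsPointedDCPO le₁) (hd2 : IsPointedDCPO le₂) :
    IsPointedDCPO (lePr le₁ le₂) := by
  refine ⟨?_, ⟨(pbot le₁ hd1, pbot le₂ hd2),
    fun a => ⟨pbot_le le₁ hd1 a.1, pbot_le le₂ hd2 a.2⟩⟩, ?_⟩
  · intro p q h1 h2
    exact Prod.ext (hd1.1 _ _ h1.1 h2.1) (hd2.1 _ _ h1.2 h2.2)
  · intro D h1 h2
    exact ⟨prLub le₁ le₂ hd1 hd2 D, prLub_isLub le₁ le₂ hd1 hd2 h1 h2⟩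

lemma prLub_fst (hd1 : IsPointedDCPO le₁) (hd2 : IsPointedDCPO le₂)
    {D : Set (α₁ × α₂)} {u : α₁ × α₂} (h1 : D.Nonempty)
    (h2 : DirectedOn (lePr le₁ le₂) D) (hu : IsLubRel (lePr le₁ le₂) D u) :
    IsLubRel le₁ (Prod.fst '' D) u.1 := by
  have := lub_unique (lePr le₁ le₂) (prDCPO le₁ le₂ hd1 hd2) hu
    (prLub_isLub le₁ le₂ hd1 hd2 h1 h2)
  rw [this]
  exact pdlub_spec le₁ hd1 (h1.image Prod.fst) (dirOn_fst le₁ le₂ h2)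

lemma prLub_snd (hd1 : IsPointedDCPO le₁) (hd2 : IsPointedDCPO le₂)
    {D : Set (α₁ × α₂)} {u : α₁ × α₂} (h1 : D.Nonempty)
    (h2 : DirectedOn (lePr le₁ le₂) D) (hu : IsLubRel (lePr le₁ le₂) D u) :
    IsLubRel le₂ (Prod.snd '' D) u.2 := by
  have := lub_unique (lePr le₁ le₂) (prDCPO le₁ le₂ hd1 hd2) hu
    (prLub_isLub le₁ le₂ hd1 hd2 h1 h2)
  rw [this]
  exact pdlub_spec le₂ hd2 (h1.image Prod.snd) (dirOn_snd le₁ le₂ h2)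

end Pairs

/-! Free monad and cofree comonad helper lemmas -/

lemma SetFunctor.map_map (B : SetFunctor) {X Y Z : Type} (f : X → Y) (g : Y → Z)
    (x : B.obj X) : B.map g (B.map f x) = B.map (g ∘ f) x :=
  (congrFun (B.map_comp f g) x).symm

section MonadLemmas

variable {S : SetFunctor} (M : FreeMonad S)

lemma mmap_ι {X Y : Type} (h : X → Y) (t : S.obj (M.obj X)) :
    M.mmap h (M.ι t) = M.ι (S.map (M.mmap h) t) :=
  M.fold_ι _ _ t

lemma mmap_η {X Y : Type} (h : X → Y) (x : X) :
    M.mmap h (M.η x) = M.η (h x) :=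
  M.fold_η _ _ x

lemma μ_ι {X : Type} (t : S.obj (M.obj (M.obj X))) :
    M.μ (M.ι t) = M.ι (S.map M.μ t) :=
  M.fold_ι _ _ t

lemma μ_η {X : Type} (t : M.obj X) : M.μ (M.η t) = t :=
  M.fold_η _ _ t

/-- naturality of μ -/
lemma μ_nat {X Y : Type} (h : X → Y) :
    M.mmap h ∘ M.μ = M.μ ∘ M.mmap (M.mmap h) := by
  have h1 : M.mmap h ∘ M.μ = M.fold M.ι (M.mmap h) := by
    apply M.fold_unique
    · intro t
      show M.mmap h (M.μ (M.ι t)) = _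
      rw [μ_ι, mmap_ι]
      rw [← Function.comp_apply (f := S.map (M.mmap h)) (g := S.map M.μ),
        ← S.map_comp]
    · intro x
      show M.mmap h (M.μ (M.η x)) = M.mmap h x
      rw [μ_η]
  have h2 : M.μ ∘ M.mmap (M.mmap h) = M.fold M.ι (M.mmap h) := by
    apply M.fold_unique
    · intro t
      show M.μ (M.mmap (M.mmap h) (M.ι t)) = _
      rw [mmap_ι, μ_ι]
      rw [← Function.comp_apply (f := S.map M.μ) (g := S.map (M.mmap (M.mmap h))),
        ← S.map_comp]
    · intro x
      show M.μ (M.mmap (M.mmap h) (M.η x)) = M.mmap h x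
      rw [mmap_η, μ_η]
  rw [h1, h2]

end MonadLemmas

section CofreeLemmas

variable {B : SetFunctor} (W : Cofree B)

lemma coext_θ {X : Type} (f : X → B.obj X) (t : X) :
    W.θ (W.coext f t) = B.map (W.coext f) (f t) :=
  W.θ_ext f id t

lemma coext_ε {X : Type} (f : X → B.obj X) (t : X) :
    W.ε (W.coext f t) = t :=
  W.ε_ext f id t

lemma cmap_θ {X Y : Type} (h : X → Y) (w : W.obj X) :
    W.θ (W.cmap h w) = B.map (W.cmap h) (W.θ w) :=
  W.θ_ext W.θ (h ∘ W.ε) w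

lemma cmap_ε {X Y : Type} (h : X → Y) (w : W.obj X) :
    W.ε (W.cmap h w) = h (W.ε w) :=
  W.ε_ext W.θ (h ∘ W.ε) w

/-- The key naturality: if `k` is a coalgebra hom from `f` to `g` then
`cmap k ∘ coext f = coext g ∘ k`. -/
lemma cmap_coext_of_hom {X Y : Type} (f : X → B.obj X) (g : Y → B.obj Y)
    (k : X → Y) (hk : ∀ t, B.map k (f t) = g (k t)) :
    W.cmap k ∘ W.coext f = W.coext g ∘ k := by
  have h1 : W.cmap k ∘ W.coext f = W.ext f k := by
    apply W.ext_unique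
    · intro t
      show W.θ (W.cmap k (W.coext f t)) = _
      rw [cmap_θ, coext_θ]
      rw [← Function.comp_apply (f := B.map (W.cmap k)) (g := B.map (W.coext f)),
        ← B.map_comp]
    · intro t
      show W.ε (W.cmap k (W.coext f t)) = k t
      rw [cmap_ε, coext_ε]
  have h2 : W.coext g ∘ k = W.ext f k := by
    apply W.ext_unique
    · intro t
      show W.θ (W.coext g (k t)) = _
      rw [coext_θ, ← hk t]
      rw [← Function.comp_apply (f := B.map (W.coext g)) (g := B.map k),
        ← B.map_comp]
    · intro t
      show W.ε (W.coext g (k t)) = k t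
      rw [coext_ε]
  rw [h1, h2]

end CofreeLemmas

/-! Strictness of `B.map` on maps with nonempty domain, given a cofree comonad -/

section Strict

variable (B : DCPOOrderedFunctor)

/-- `B.map e` is strict for surjective `e`. -/
lemma epi_bot {D E : Type} (e : D → E) (he : Function.Surjective e)
    (bD : B.obj D) (bE : B.obj E) (hbD : ∀ z, B.le bD z) (hbE : ∀ z, B.le bE z) :
    B.map e bD = bE := by
  apply (B.dcpo E).1
  · have h1 : B.le (B.map e bD) (B.map e (B.map (Function.surjInv he) bE)) :=
      B.map_mono e (hbD _)
    have h2 : B.map e (B.map (Function.surjInv he) bE) = bE := by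
      rw [← Function.comp_apply (f := B.map e), ← B.map_comp]
      have : e ∘ Function.surjInv he = id := funext fun b => Function.surjInv_eq he b
      rw [this, B.map_id]
      rfl
    rwa [h2] at h1
  · exact hbE _

/-- any canonical injection into the cofree comonad -/
lemma coext_bot_inj (W : Cofree B.toOrderedFunctor.toSetFunctor) (Z : Type) :
    Function.Injective
      (W.ext (fun _ : Z => pbot (fun a b => B.le a b) (B.dcpo Z)) id) := by
  intro z z' h
  have h1 := W.ε_ext (fun _ : Z => pbot (fun a b => B.le a b) (B.dcpo Z)) id z
  have h2 := W.ε_ext (fun _ : Z => pbot (fun a b => B.le a b) (B.dcpo Z)) id z'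
  simp only [id_eq] at h1 h2
  rw [← h1, ← h2, h]

/-- Key lemma: given a cofree comonad, `B.map f` is strict whenever the domain
is nonempty. -/
lemma strictAux (W : Cofree B.toOrderedFunctor.toSetFunctor) {A C : Type}
    (f : A → C) (a₀ : A) (bA : B.obj A) (bC : B.obj C)
    (hbA : ∀ z, B.le bA z) (hbC : ∀ z, B.le bC z) :
    B.map f bA = bC := by
  classical
  by_contra hv
  haveI : Nonempty C := ⟨f a₀⟩
  -- the ambient set
  set X₀ := C ⊕ ℕ with hX₀
  set T := W.obj X₀ with hT
  -- Lambek: θ ∘ ψ = id for a suitable ψ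
  set γ : T → B.obj T × X₀ := fun w => (W.θ w, W.ε w) with hγ
  set fA : B.obj T × X₀ → B.obj (B.obj T × X₀) := fun p => B.map γ p.1 with hfA
  set j : B.obj T × X₀ → T := W.ext fA Prod.snd with hj
  have hjγ : j ∘ γ = id := by
    have h1 : j ∘ γ = W.ext W.θ W.ε := by
      apply W.ext_unique
      · intro w
        show W.θ (j (γ w)) = _
        rw [hj, W.θ_ext]
        show B.map j (B.map γ (W.θ w)) = _
        rw [← Function.comp_apply (f := B.map j), ← B.map_comp]
      · intro w
        show W.ε (j (γ w)) = W.ε w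
        rw [hj, W.ε_ext]
    have h2 : (id : T → T) = W.ext W.θ W.ε := by
      apply W.ext_unique
      · intro w
        show W.θ w = B.map id (W.θ w)
        rw [B.map_id]
        rfl
      · intro w; rfl
    rw [h1, ← h2]
  set ψ : B.obj T → T := fun b => j (b, Sum.inr 0) with hψ
  have hθψ : ∀ b, W.θ (ψ b) = b := by
    intro b
    show W.θ (j (b, Sum.inr 0)) = b
    rw [hj, W.θ_ext]
    show B.map j (B.map γ b) = b
    rw [← Function.comp_apply (f := B.map j), ← B.map_comp, hjγ, B.map_id]
    rfl
  have hψinj : Function.Injective ψ := fun b b' h => by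
    rw [← hθψ b, ← hθψ b', h]
  -- cardinalities: C × T ≃ T
  have hsec : ∀ (Z : Type), Cardinal.mk Z ≤ Cardinal.mk (W.obj Z) := fun Z =>
    Cardinal.mk_le_of_injective (coext_bot_inj B W Z)
  have hCT : Cardinal.mk C ≤ Cardinal.mk T := by
    have h1 : Cardinal.mk C ≤ Cardinal.mk X₀ :=
      Cardinal.mk_le_of_injective (Sum.inl_injective (α := C) (β := ℕ))
    exact h1.trans (hsec X₀)
  have hNT : Cardinal.aleph0 ≤ Cardinal.mk T := by
    have h1 : Cardinal.mk ℕ ≤ Cardinal.mk X₀ :=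
      Cardinal.mk_le_of_injective (Sum.inr_injective (α := C) (β := ℕ))
    rw [Cardinal.mk_nat] at h1
    exact h1.trans (hsec X₀)
  have hmkeq : Cardinal.mk (C × T) = Cardinal.mk T := by
    rw [Cardinal.mk_prod, Cardinal.lift_id, Cardinal.lift_id]
    exact Cardinal.mul_eq_right hNT hCT (Cardinal.mk_ne_zero C)
  obtain ⟨eqv⟩ := Cardinal.eq.mp hmkeq
  have heqvinj : Function.Injective (B.map (eqv : C × T → T)) := by
    intro b b' h
    have h2 := congrArg (B.map (eqv.symm : T → C × T)) h
    rw [← Function.comp_apply (f := B.map (eqv.symm : T → C × T)),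
      ← Function.comp_apply (f := B.map (eqv.symm : T → C × T)) (x := b'),
      ← B.map_comp] at h2
    have h3 : (eqv.symm : T → C × T) ∘ (eqv : C × T → T) = id :=
      funext fun p => eqv.symm_apply_apply p
    rwa [h3, B.map_id] at h2
  -- the injection from sets of T into T
  set Dom := A × (C × T) with hDom
  set botDom := pbot (fun a b => B.le a b) (B.dcpo Dom) with hbotDom
  have hbotDom_le : ∀ z, B.le botDom z := fun z =>
    pbot_le (fun a b => B.le a b) (B.dcpo Dom) z
  set γU : Set T → Dom → C × T :=
    fun U p => (if p.2.2 ∈ U then f p.1 else p.2.1, p.2.2) with hγU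
  -- the main distinguishing computation
  have hsub : ∀ (U U' : Set T) (t₀ : T), t₀ ∈ U → t₀ ∉ U' →
      B.map (γU U) botDom = B.map (γU U') botDom → False := by
    intro U U' t₀ hU hU' he
    set m : C × T → C := fun q => if q.2 = t₀ then q.1 else f a₀ with hm
    have e1 : B.map m (B.map (γU U) botDom) = B.map f bA := by
      rw [← Function.comp_apply (f := B.map m), ← B.map_comp]
      have hq : m ∘ γU U = f ∘ (fun p : Dom => if p.2.2 = t₀ then p.1 else a₀) := by
        funext p
        simp only [hm, hγU, Function.comp_apply]
        by_cases hp : p.2.2 = t₀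
        · simp [hp, hU]
        · simp [hp]
      rw [hq, B.map_comp]
      have hqsurj : Function.Surjective (fun p : Dom => if p.2.2 = t₀ then p.1 else a₀) := by
        intro a
        exact ⟨(a, (f a₀, t₀)), by simp⟩
      have := epi_bot B _ hqsurj botDom bA hbotDom_le hbA
      show B.map f (B.map (fun p : Dom => if p.2.2 = t₀ then p.1 else a₀) botDom) = _
      rw [this]
    have e2 : B.map m (B.map (γU U') botDom) = bC := by
      rw [← Function.comp_apply (f := B.map m), ← B.map_comp]
      have hq : m ∘ γU U' = fun p : Dom => if p.2.2 = t₀ then p.2.1 else f a₀ := by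
        funext p
        simp only [hm, hγU, Function.comp_apply]
        by_cases hp : p.2.2 = t₀
        · simp [hp, hU']
        · simp [hp]
      rw [hq]
      apply epi_bot B _ _ botDom bC hbotDom_le hbC
      intro c
      exact ⟨(a₀, (c, t₀)), by simp⟩
    rw [he, e2] at e1
    exact hv e1.symm
  -- Cantor
  set F : Set T → T := fun U => ψ (B.map (eqv : C × T → T) (B.map (γU U) botDom)) with hF
  have hFinj : Function.Injective F := by
    intro U U' h
    have h1 : B.map (γU U) botDom = B.map (γU U') botDom :=
      heqvinj (hψinj h)
    by_contra hUU'
    have h2 : ¬ ∀ t, t ∈ U ↔ t ∈ U' := fun hh => hUU' (Set.ext hh)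
    push_neg at h2
    obtain ⟨t₀, ht₀⟩ := h2
    rcases ht₀ with ⟨hin, hnotin⟩ | ⟨hnotin, hin⟩
    · exact hsub U U' t₀ hin hnotin h1
    · exact hsub U' U t₀ hin hnotin h1.symm
  exact Function.cantor_injective F hFinj

end Strict

/-! Monotonicity of `phiC` and the homomorphism step lemma -/

section PhiLemmas

variable {S : SetFunctor} {B : DCPOOrderedFunctor}
  {W : Cofree B.toOrderedFunctor.toSetFunctor} {M : FreeMonad S}

/-- coinductive extensions of pointwise-ordered coalgebras are similar -/
lemma coext_sim (ρ : BiGSOS S B.toOrderedFunctor W M) {Z : Type}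
    {f g : Z → B.obj Z} (hfg : ∀ t, B.le (f t) (g t)) (u : Z) :
    cofreeSim B.toOrderedFunctor W Z (W.coext f u) (W.coext g u) := by
  classical
  refine ⟨fun w w' => ∃ u', w = W.coext f u' ∧ w' = W.coext g u', ?_, ⟨u, rfl, rfl⟩⟩
  rintro w w' ⟨u', rfl, rfl⟩
  -- lax relation lifting for the product functor
  refine ⟨(B.map (W.coext f) (f u'), u'), (B.map (W.coext g) (f u'), u'), ?_, ?_, ?_⟩
  · refine ⟨?_, ?_⟩
    · show B.le (W.θ (W.coext f u')) (B.map (W.coext f) (f u'))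
      rw [coext_θ]
      exact B.le_refl _
    · show W.ε (W.coext f u') = u'
      exact coext_ε W f u'
  · refine ⟨(B.map (fun u'' : Z =>
      (⟨(W.coext f u'', W.coext g u''), ⟨u'', rfl, rfl⟩⟩ :
        {p : W.obj Z × W.obj Z // ∃ u', p.1 = W.coext f u' ∧ p.2 = W.coext g u'}))
      (f u'), u'), ?_, ?_⟩
    · have h1 : B.map
          (fun p : {p : W.obj Z × W.obj Z //
            ∃ u', p.1 = W.coext f u' ∧ p.2 = W.coext g u'} => (↑p : W.obj Z × W.obj Z).1)
          (B.map (fun u'' : Z =>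
            (⟨(W.coext f u'', W.coext g u''), ⟨u'', rfl, rfl⟩⟩ :
              {p : W.obj Z × W.obj Z //
                ∃ u', p.1 = W.coext f u' ∧ p.2 = W.coext g u'})) (f u'))
          = B.map (W.coext f) (f u') := by
        rw [SetFunctor.map_map]
        rfl
      exact congrArg (fun z => (z, u')) h1
    · have h1 : B.map
          (fun p : {p : W.obj Z × W.obj Z //
            ∃ u', p.1 = W.coext f u' ∧ p.2 = W.coext g u'} => (↑p : W.obj Z × W.obj Z).2)
          (B.map (fun u'' : Z =>
            (⟨(W.coext f u'', W.coext g u''), ⟨u'', rfl, rfl⟩⟩ :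
              {p : W.obj Z × W.obj Z //
                ∃ u', p.1 = W.coext f u' ∧ p.2 = W.coext g u'})) (f u'))
          = B.map (W.coext g) (f u') := by
        rw [SetFunctor.map_map]
        rfl
      exact congrArg (fun z => (z, u')) h1
  · refine ⟨?_, ?_⟩
    · show B.le (B.map (W.coext g) (f u')) (W.θ (W.coext g u'))
      rw [coext_θ]
      exact B.map_mono _ (hfg u')
    · show u' = W.ε (W.coext g u')
      exact (coext_ε W g u').symm

/-- `phiC` is monotone. -/
lemma phiC_mono (ρ : BiGSOS S B.toOrderedFunctor W M) (hm : ρ.Monotone)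
    {X : Type} (c : X → B.obj X)
    {f g : M.obj X → B.obj (M.obj X)} (hfg : ∀ t, B.le (f t) (g t)) :
    ∀ t, B.le (phiC ρ c f t) (phiC ρ c g t) := by
  intro t
  show B.le (Sum.elim _ _ (M.dest t)) (Sum.elim _ _ (M.dest t))
  rcases ht : M.dest t with s | x
  · simp only [Sum.elim_inl]
    apply B.map_mono
    apply hm (M.obj X)
    refine ⟨S.map (fun u : M.obj X =>
      (⟨(W.coext f u, W.coext g u), coext_sim ρ hfg u⟩ :
        {p : W.obj (M.obj X) × W.obj (M.obj X) //
          cofreeSim B.toOrderedFunctor W (M.obj X) p.1 p.2})) s, ?_, ?_⟩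
    · rw [SetFunctor.map_map]
      rfl
    · rw [SetFunctor.map_map]
      rfl
  · simp only [Sum.elim_inr]
    exact B.le_refl _

/-- the homomorphism step lemma -/
lemma step_eq (ρ : BiGSOS S B.toOrderedFunctor W M)
    {X Y : Type} (c : X → B.obj X) (d : Y → B.obj Y) (h : X → Y)
    (hhom : IsCoalgHom B.toOrderedFunctor.toSetFunctor c d h)
    {f : M.obj X → B.obj (M.obj X)} {g : M.obj Y → B.obj (M.obj Y)}
    (hfg : ∀ t, B.map (M.mmap h) (f t) = g (M.mmap h t)) :
    ∀ t, B.map (M.mmap h) (phiC ρ c f t) = phiC ρ d g (M.mmap h t) := by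
  intro t
  have hdest := M.elim_dest t
  rcases ht : M.dest t with s | x
  · have ht2 : t = M.ι s := by
      rw [← hdest, ht]
      rfl
    subst ht2
    show B.map (M.mmap h) (Sum.elim _ _ (M.dest (M.ι s))) = _
    rw [M.dest_ι]
    simp only [Sum.elim_inl]
    rw [mmap_ι]
    show _ = Sum.elim _ _ (M.dest (M.ι (S.map (M.mmap h) s)))
    rw [M.dest_ι]
    simp only [Sum.elim_inl]
    -- compute the left hand side
    rw [← Function.comp_apply (f := B.map (M.mmap h)) (g := B.map M.μ), ← B.map_comp,
      μ_nat M h, B.map_comp]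
    show B.map M.μ (B.map (M.mmap (M.mmap h)) (ρ.app (S.map (W.coext f) s))) = _
    rw [← ρ.naturality (M.mmap h)]
    rw [← Function.comp_apply (f := S.map (W.cmap (M.mmap h))), ← S.map_comp,
      cmap_coext_of_hom W f g (M.mmap h) hfg, S.map_comp]
    rfl
  · have ht2 : t = M.η x := by
      rw [← hdest, ht]
      rfl
    subst ht2
    show B.map (M.mmap h) (Sum.elim _ _ (M.dest (M.η x))) = _
    rw [M.dest_η]
    simp only [Sum.elim_inr]
    rw [mmap_η]
    show _ = Sum.elim _ _ (M.dest (M.η (h x)))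
    rw [M.dest_η]
    simp only [Sum.elim_inr]
    rw [← Function.comp_apply (f := B.map (M.mmap h)) (g := B.map M.η), ← B.map_comp]
    have hcomp : M.mmap h ∘ M.η = M.η ∘ h := funext fun x' => mmap_η M h x'
    rw [hcomp, B.map_comp]
    show B.map M.η (B.map h (c x)) = _
    rw [hhom x]

theorem statement8 (S : SetFunctor) (B : DCPOOrderedFunctor)
    (W : Cofree B.toOrderedFunctor.toSetFunctor) (M : FreeMonad S)
    (ρ : BiGSOS S B.toOrderedFunctor W M) (hmono : ρ.Monotone) :
    (∀ (X : Type) (c : X → B.obj X),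
      ∃ cbar : M.obj X → B.obj (M.obj X), IsLfpCoalg B.toOrderedFunctor (phiC ρ c) cbar) ∧
    (∀ (X Y : Type) (c : X → B.obj X) (d : Y → B.obj Y)
      (cbar : M.obj X → B.obj (M.obj X)) (dbar : M.obj Y → B.obj (M.obj Y)),
      IsLfpCoalg B.toOrderedFunctor (phiC ρ c) cbar →
      IsLfpCoalg B.toOrderedFunctor (phiC ρ d) dbar →
      ∀ h : X → Y, IsCoalgHom B.toOrderedFunctor.toSetFunctor c d h →
        IsCoalgHom B.toOrderedFunctor.toSetFunctor cbar dbar (M.mmap h)) := by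
  classical
  constructor
  · -- Part 1: existence of the least fixed point
    intro X c
    obtain ⟨m, hfix, hleast, -⟩ :=
      genLfp (leFn (ι := M.obj X) (fun a b : B.obj (M.obj X) => B.le a b))
        (leFn_refl _ (fun a => B.le_refl a))
        (fnDCPO _ (B.dcpo (M.obj X)))
        (phiC ρ c)
        (fun {a b} hab => phiC_mono ρ hmono c hab)
    exact ⟨m, hfix, fun f hf t => hleast f hf t⟩
  · -- Part 2: functoriality
    intro X Y c d cbar dbar hc hd h hhom
    intro t
    set k := M.mmap h with hk
    -- strictness of `B.map k`
    have hstrict : ∀ (bA : B.obj (M.obj X)) (bC : B.obj (M.obj Y)),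
        (∀ z, B.le bA z) → (∀ z, B.le bC z) → B.map k bA = bC :=
      fun bA bC h1 h2 => strictAux B W k t bA bC h1 h2
    -- the product of the two coalgebra dcpos
    set le1 := leFn (ι := M.obj X) (fun a b : B.obj (M.obj X) => B.le a b) with hle1
    set le2 := leFn (ι := M.obj Y) (fun a b : B.obj (M.obj Y) => B.le a b) with hle2
    have hdc1 := fnDCPO (ι := M.obj X) (fun a b : B.obj (M.obj X) => B.le a b)
      (B.dcpo (M.obj X))
    have hdc2 := fnDCPO (ι := M.obj Y) (fun a b : B.obj (M.obj Y) => B.le a b)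
      (B.dcpo (M.obj Y))
    obtain ⟨m, hfix, hleast, hinv⟩ :=
      genLfp (lePr le1 le2)
        (fun p => ⟨leFn_refl _ (fun a => B.le_refl a) p.1,
          leFn_refl _ (fun a => B.le_refl a) p.2⟩)
        (prDCPO le1 le2 hdc1 hdc2)
        (fun p => (phiC ρ c p.1, phiC ρ d p.2))
        (fun {p q} hpq => ⟨phiC_mono ρ hmono c hpq.1, phiC_mono ρ hmono d hpq.2⟩)
    have hfix1 : phiC ρ c m.1 = m.1 := congrArg Prod.fst hfix
    have hfix2 : phiC ρ d m.2 = m.2 := congrArg Prod.snd hfix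
    -- the given least fixed points agree with the components of `m`
    have hpair_fixed : (fun p : (M.obj X → B.obj (M.obj X)) × (M.obj Y → B.obj (M.obj Y)) =>
        (phiC ρ c p.1, phiC ρ d p.2)) (cbar, dbar) = (cbar, dbar) :=
      Prod.ext hc.1 hd.1
    have hle_m : lePr le1 le2 m (cbar, dbar) := hleast (cbar, dbar) hpair_fixed
    have hcbar : cbar = m.1 :=
      funext fun t' => (B.dcpo (M.obj X)).1 _ _ (hc.2 m.1 hfix1 t') (hle_m.1 t')
    have hdbar : dbar = m.2 :=
      funext fun t' => (B.dcpo (M.obj Y)).1 _ _ (hd.2 m.2 hfix2 t') (hle_m.2 t')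
    -- the homomorphism invariant
    have hP : ∀ t', B.map k (m.1 t') = m.2 (k t') := by
      apply hinv (fun p => ∀ t', B.map k (p.1 t') = p.2 (k t'))
      · -- bottom
        intro b hb t'
        apply hstrict
        · intro z
          exact (hb (fun _ => z, b.2)).1 t'
        · intro z
          exact (hb (b.1, fun _ => z)).2 (k t')
      · -- step
        intro a ha
        exact step_eq ρ c d h hhom ha
      · -- lubs
        intro D hne hdir hDP u hu t'
        have hu1 := prLub_fst le1 le2 hdc1 hdc2 hne hdir hu
        have hu2 := prLub_snd le1 le2 hdc1 hdc2 hne hdir hu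
        have hne1 : (Prod.fst '' D).Nonempty := hne.image _
        have hdir1 : DirectedOn le1 (Prod.fst '' D) := dirOn_fst le1 le2 hdir
        have hp1 := fnLub_pointwise (fun a b : B.obj (M.obj X) => B.le a b)
          (B.dcpo (M.obj X)) hne1 hdir1 hu1 t'
        have hp2 := fnLub_pointwise (fun a b : B.obj (M.obj Y) => B.le a b)
          (B.dcpo (M.obj Y)) (hne.image _) (dirOn_snd le1 le2 hdir) hu2 (k t')
        have hneE : ((fun f => f t') '' (Prod.fst '' D)).Nonempty := hne1.image _
        have hdirE : DirectedOn (fun a b : B.obj (M.obj X) => B.le a b)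
            ((fun f => f t') '' (Prod.fst '' D)) :=
          dirOn_image_fn (fun a b : B.obj (M.obj X) => B.le a b) hdir1 t'
        have hcont := B.map_cont k _ _ hneE hdirE hp1
        have hseteq : B.map k '' ((fun f => f t') '' (Prod.fst '' D)) =
            (fun g => g (k t')) '' (Prod.snd '' D) := by
          ext b
          constructor
          · rintro ⟨b', ⟨f', ⟨p, hp, rfl⟩, rfl⟩, rfl⟩
            exact ⟨p.2, ⟨p, hp, rfl⟩, (hDP p hp t').symm⟩
          · rintro ⟨g', ⟨p, hp, rfl⟩, rfl⟩
            exact ⟨p.1 t', ⟨p.1, ⟨p, hp, rfl⟩, rfl⟩, hDP p hp t'⟩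
        rw [hseteq] at hcont
        exact (B.dcpo (M.obj Y)).1 _ _ (hcont.2 _ hp2.1) (hp2.2 _ hcont.1)
    rw [hcbar, hdbar]
    exact hP t
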